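/- arXiv:math/0611112 — 2 statements merged into one kernel-verified Lean document; each statement's English description precedes it below -/
import Mathlib

section
/- Let a : ℝ^d → [0,∞) and K ≥ 0. The following are equivalent (possibly with a different constant): (i) for every unit vector l ∈ ℝ^d and η > 0, |δ_{η,l}a(x)| ≤ K(√(a(x)) + η) for all x; (ii) the function σ := √a is Lipschitz continuous with constant K. -/
/-- First-order finite difference `δ_{ν,l}φ(x) = (φ(x+νl) − φ(x))/ν`. -/
noncomputable def fdiff {E : Type*} [AddCommGroup E] [Module ℝ E]
    (ν : ℝ) (l : E) (φ : E → ℝ) (x : E) : ℝ :=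
  (φ (x + ν • l) - φ x) / ν

/-!
If `σ = √a` is `K`-Lipschitz, then `a(x + ηl) − a(x) = (σ(x + ηl) − σ(x))(σ(x + ηl) + σ(x))`
with the first factor at most `Kη` in size and the second at most `2σ(x) + Kη`.
Conversely, taking `l` to be the unit vector from `x` to `y` and `η = ‖y − x‖`, the bound on
`δ_{η,l}a(x)` gives `σ(y)² ≤ σ(x)² + Kη(σ(x) + η) ≤ (σ(x) + (K + 1)η)²`, so `√a` is
`(K + 1)`-Lipschitz.
-/

open Real

lemma abs_sq_sub_sq_le_of_abs_sub_le {s t c : ℝ} (hs : 0 ≤ s) (ht : 0 ≤ t) (h : |t - s| ≤ c) :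
    |t ^ 2 - s ^ 2| ≤ c * (2 * s + c) := by
  have hsum : t + s ≤ 2 * s + c := by linarith [le_of_abs_le h]
  calc |t ^ 2 - s ^ 2| = |t - s| * (t + s) := by
        rw [show t ^ 2 - s ^ 2 = (t - s) * (t + s) by ring, abs_mul, abs_of_nonneg (add_nonneg ht hs)]
    _ ≤ c * (2 * s + c) := mul_le_mul h hsum (by linarith) ((abs_nonneg _).trans h)

lemma le_add_mul_of_sq_le {s t K η : ℝ} (hs : 0 ≤ s) (hK : 0 ≤ K) (hη : 0 ≤ η)
    (h : t ^ 2 ≤ s ^ 2 + K * η * (s + η)) : t ≤ s + (K + 1) * η := by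
  have hsq : t ^ 2 ≤ (s + (K + 1) * η) ^ 2 := by
    nlinarith [mul_nonneg (mul_nonneg hK hη) hs, mul_nonneg hη hs, mul_nonneg hK hη, sq_nonneg η,
      mul_nonneg (mul_nonneg hK hK) (sq_nonneg η)]
  exact (abs_le_of_sq_le_sq hsq (by positivity)).trans' (le_abs_self t)

lemma fdiff_mul_eq_sub {E : Type*} [AddCommGroup E] [Module ℝ E] {η : ℝ} (hη : η ≠ 0) (l : E)
    (φ : E → ℝ) (x : E) : fdiff η l φ x * η = φ (x + η • l) - φ x :=
  div_mul_cancel₀ _ hη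

section NormedSpace

variable {E : Type*} [NormedAddCommGroup E] [NormedSpace ℝ E] {a : E → ℝ}

lemma fdiff_toward_mul_norm_sub {x y : E} (hxy : x ≠ y) :
    fdiff ‖y - x‖ (‖y - x‖⁻¹ • (y - x)) a x * ‖y - x‖ = a y - a x := by
  have hη : ‖y - x‖ ≠ 0 := norm_ne_zero_iff.mpr (sub_ne_zero.mpr hxy.symm)
  rw [fdiff_mul_eq_sub hη, smul_smul, mul_inv_cancel₀ hη, one_smul, add_sub_cancel]

lemma abs_fdiff_le_of_lipschitzWith_sqrt (ha : ∀ x, 0 ≤ a x) {K : NNReal}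
    (hK : LipschitzWith K fun x => √(a x)) {l : E} (hl : ‖l‖ = 1) {η : ℝ} (hη : 0 < η) (x : E) :
    |fdiff η l a x| ≤ (2 * K + K * K) * (√(a x) + η) := by
  have hdist : dist (x + η • l) x = η := by
    rw [dist_eq_norm, add_sub_cancel_left, norm_smul, hl, mul_one, norm_of_nonneg hη.le]
  have hσ : |√(a (x + η • l)) - √(a x)| ≤ K * η := by
    simpa only [← Real.dist_eq, hdist] using hK.dist_le_mul (x + η • l) x
  have hsq := abs_sq_sub_sq_le_of_abs_sub_le (sqrt_nonneg _) (sqrt_nonneg _) hσ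
  rw [sq_sqrt (ha _), sq_sqrt (ha _), ← fdiff_mul_eq_sub hη.ne' l a x, abs_mul, abs_of_pos hη] at hsq
  refine le_of_mul_le_mul_right (hsq.trans ?_) hη
  have : 0 ≤ (K : ℝ) := K.coe_nonneg
  nlinarith [mul_nonneg this (sqrt_nonneg (a x)), mul_nonneg (mul_nonneg this this) (sqrt_nonneg (a x)),
    mul_nonneg this hη.le, mul_nonneg (mul_nonneg this this) hη.le]

lemma lipschitzWith_sqrt_of_abs_fdiff_le (ha : ∀ x, 0 ≤ a x) {K : ℝ} (hK : 0 ≤ K)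
    (hδ : ∀ l : E, ‖l‖ = 1 → ∀ η > (0 : ℝ), ∀ x, |fdiff η l a x| ≤ K * (√(a x) + η)) :
    LipschitzWith ⟨K + 1, by positivity⟩ fun x => √(a x) := by
  refine LipschitzWith.of_le_add_mul _ fun y x => ?_
  rcases eq_or_ne x y with rfl | hxy
  · simp
  set η := ‖y - x‖
  have hη : 0 < η := norm_pos_iff.mpr (sub_ne_zero.mpr hxy.symm)
  have hl : ‖η⁻¹ • (y - x)‖ = 1 := by rw [norm_smul, norm_inv, norm_norm, inv_mul_cancel₀ hη.ne']
  have hincr : a y - a x ≤ K * η * (√(a x) + η) := by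
    rw [← fdiff_toward_mul_norm_sub hxy, mul_right_comm]
    exact mul_le_mul_of_nonneg_right ((le_abs_self _).trans (hδ _ hl η hη x)) hη.le
  rw [dist_eq_norm]
  refine le_add_mul_of_sq_le (sqrt_nonneg _) hK hη.le ?_
  rw [sq_sqrt (ha _), sq_sqrt (ha _)]
  linarith

end NormedSpace

/-- For a nonnegative function `a`, the bound
`|δ_{η,l}a(x)| ≤ K(√(a x) + η)` for all unit vectors `l` and all `η > 0`
holds for some constant `K ≥ 0` if and only if `σ = √a` is Lipschitz
continuous with some constant (equivalence up to a change of the constant). -/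
theorem stmt_4 {d : ℕ} (a : EuclideanSpace ℝ (Fin d) → ℝ) (ha : ∀ x, 0 ≤ a x) :
    (∃ K ≥ (0 : ℝ), ∀ l : EuclideanSpace ℝ (Fin d), ‖l‖ = 1 → ∀ η > (0 : ℝ), ∀ x,
        |fdiff η l a x| ≤ K * (Real.sqrt (a x) + η))
      ↔ (∃ K : NNReal, LipschitzWith K fun x => Real.sqrt (a x)) :=
  ⟨fun ⟨K, hK, hδ⟩ => ⟨_, lipschitzWith_sqrt_of_abs_fdiff_le ha hK hδ⟩,
    fun ⟨K, hK⟩ => ⟨2 * K + K * K, by positivity, fun _ hl _ hη x =>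
      abs_fdiff_le_of_lipschitzWith_sqrt ha hK hl hη x⟩⟩
end

section
/- Let d₁ ≥ 1, ε > 0 satisfy ε⁻¹ − 2εd₁ = 1, and let h_i > 0 and ℓ_i ∈ ℝ^d for i = ±1,…,±d₁ with ℓ_{−i} = −ℓ_i and h_{−i} = h_i. Let φ : ℝ^d → ℝ satisfy max_i |δ_i φ(x)| ≤ max_i |δ_i φ(0)| for all x ∈ {h_iℓ_i : i = ±1,…,±d₁}, where δ_iφ(x) = (φ(x+h_iℓ_i) − φ(x))/h_i. Then max_i |δ_i φ(0)| ≤ max{ (Σ_i γ_i δ_i φ(x))⁻ : γ_i ∈ [ε, ε⁻¹] for all i, x ∈ {0} ∪ {h_jℓ_j : j} }. -/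
/-- Negative part `a⁻ = max(−a, 0)`. -/
def npart (a : ℝ) : ℝ := max (-a) 0

/-- The signed index set `{±1, …, ±d₁}` as a finite set of integers. -/
noncomputable def signedIdx (d₁ : ℕ) : Finset ℤ := (Finset.Icc (-(d₁ : ℤ)) d₁).erase 0

/-!
Let `M = max_i |δ_i φ(0)|`, attained at `i₀`. Either `δ_{i₀} φ(0) = -M`, or `δ_{i₀} φ(0) = M` and
then, by the symmetry `h_{-i} ℓ_{-i} = -h_i ℓ_i`, `δ_{-i₀} φ(h_{i₀} ℓ_{i₀}) = -M`. So at some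
admissible point `x` one difference equals `-M` while, by the hypothesis, all differences at `x`
are at most `M`. Putting the weight `ε⁻¹` on that difference and `ε` on the `2 d₁ - 1` others gives
`Σ_i γ_i δ_i φ(x) ≤ -ε⁻¹ M + (2 d₁ - 1) ε M = -(1 + ε) M ≤ -M`.
-/

open Finset

lemma mem_signedIdx {d₁ : ℕ} {i : ℤ} :
    i ∈ signedIdx d₁ ↔ i ≠ 0 ∧ -(d₁ : ℤ) ≤ i ∧ i ≤ d₁ := by
  simp [signedIdx]

lemma neg_mem_signedIdx {d₁ : ℕ} {i : ℤ} (h : i ∈ signedIdx d₁) : -i ∈ signedIdx d₁ := by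
  rw [mem_signedIdx] at h ⊢
  omega

lemma signedIdx_nonempty {d₁ : ℕ} (hd₁ : 1 ≤ d₁) : (signedIdx d₁).Nonempty :=
  ⟨1, mem_signedIdx.2 (by omega)⟩

lemma card_signedIdx (d₁ : ℕ) : #(signedIdx d₁) = 2 * d₁ := by
  rw [signedIdx, card_erase_of_mem (by simp), Int.card_Icc]
  omega

lemma fdiff_neg_add_smul {E : Type*} [AddCommGroup E] [Module ℝ E]
    (ν : ℝ) (l : E) (φ : E → ℝ) (x : E) :
    fdiff ν (-l) φ (x + ν • l) = -fdiff ν l φ x := by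
  simp only [fdiff, smul_neg, add_neg_cancel_right]
  rw [← neg_div, neg_sub]

lemma sum_ite_mul_le {ι : Type*} [DecidableEq ι] {S : Finset ι} {i₁ : ι} (hi₁ : i₁ ∈ S)
    {a : ι → ℝ} {c ε M : ℝ} (hε : 0 ≤ ε) (ha : a i₁ = -M) (hle : ∀ j ∈ S, a j ≤ M) :
    ∑ j ∈ S, (if j = i₁ then c else ε) * a j ≤ -(c * M) + (#S - 1) * (ε * M) := by
  have hcard : (#(S.erase i₁) : ℝ) = #S - 1 := by
    rw [← card_erase_add_one hi₁]
    push_cast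
    ring
  have hrest : ∀ j ∈ S.erase i₁, (if j = i₁ then c else ε) * a j ≤ ε * M := fun j hj => by
    rw [if_neg (ne_of_mem_erase hj)]
    exact mul_le_mul_of_nonneg_left (hle j (mem_of_mem_erase hj)) hε
  have hsum_rest := sum_le_sum hrest
  rw [sum_const, nsmul_eq_mul, hcard] at hsum_rest
  rw [← add_sum_erase S _ hi₁, if_pos rfl, ha]
  linarith

lemma exists_fdiff_eq_neg_of_isMax {d d₁ : ℕ} (hstep : ℤ → ℝ) (ℓ : ℤ → Fin d → ℝ)
    (hsymℓ : ∀ i, ℓ (-i) = -ℓ i) (hsymh : ∀ i, hstep (-i) = hstep i) (φ : (Fin d → ℝ) → ℝ)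
    (hhyp : ∀ j ∈ signedIdx d₁, ∀ i ∈ signedIdx d₁, ∃ i' ∈ signedIdx d₁,
      |fdiff (hstep i) (ℓ i) φ (hstep j • ℓ j)| ≤ |fdiff (hstep i') (ℓ i') φ 0|)
    {i₀ : ℤ} (hi₀ : i₀ ∈ signedIdx d₁)
    (hmax : ∀ i ∈ signedIdx d₁, |fdiff (hstep i) (ℓ i) φ 0| ≤ |fdiff (hstep i₀) (ℓ i₀) φ 0|) :
    ∃ i₁ ∈ signedIdx d₁,
      ∃ x ∈ insert (0 : Fin d → ℝ) ((signedIdx d₁).image fun j => hstep j • ℓ j),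
        fdiff (hstep i₁) (ℓ i₁) φ x = -|fdiff (hstep i₀) (ℓ i₀) φ 0| ∧
        ∀ j ∈ signedIdx d₁, fdiff (hstep j) (ℓ j) φ x ≤ |fdiff (hstep i₀) (ℓ i₀) φ 0| := by
  rcases le_or_gt (fdiff (hstep i₀) (ℓ i₀) φ 0) 0 with hneg | hpos
  · refine ⟨i₀, hi₀, 0, mem_insert_self _ _, by rw [abs_of_nonpos hneg, neg_neg], ?_⟩
    exact fun j hj => (le_abs_self _).trans (hmax j hj)
  · refine ⟨-i₀, neg_mem_signedIdx hi₀, hstep i₀ • ℓ i₀,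
      mem_insert_of_mem (mem_image_of_mem _ hi₀), ?_, fun j hj => ?_⟩
    · rw [hsymh, hsymℓ, ← zero_add (hstep i₀ • ℓ i₀), fdiff_neg_add_smul, abs_of_pos hpos]
    · obtain ⟨i', hi', hle⟩ := hhyp i₀ hi₀ j hj
      exact (le_abs_self _).trans (hle.trans (hmax i' hi'))

theorem stmt_8_general {d d₁ : ℕ} (hd₁ : 1 ≤ d₁) (ε : ℝ) (hε : 0 < ε)
    (hεe : ε⁻¹ - 2 * ε * d₁ = 1)
    (hstep : ℤ → ℝ) (ℓ : ℤ → Fin d → ℝ)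
    (hsymℓ : ∀ i, ℓ (-i) = -ℓ i)
    (hsymh : ∀ i, hstep (-i) = hstep i)
    (φ : (Fin d → ℝ) → ℝ)
    (hhyp : ∀ j ∈ signedIdx d₁, ∀ i ∈ signedIdx d₁, ∃ i' ∈ signedIdx d₁,
      |fdiff (hstep i) (ℓ i) φ (hstep j • ℓ j)| ≤ |fdiff (hstep i') (ℓ i') φ 0|) :
    ∃ γ : ℤ → ℝ, (∀ i ∈ signedIdx d₁, ε ≤ γ i ∧ γ i ≤ ε⁻¹) ∧
      ∃ x ∈ insert (0 : Fin d → ℝ) ((signedIdx d₁).image fun j => hstep j • ℓ j),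
        ∀ i ∈ signedIdx d₁,
          |fdiff (hstep i) (ℓ i) φ 0|
            ≤ npart (∑ j ∈ signedIdx d₁, γ j * fdiff (hstep j) (ℓ j) φ x) := by
  classical
  obtain ⟨i₀, hi₀, hmax⟩ :=
    (signedIdx d₁).exists_max_image (fun i => |fdiff (hstep i) (ℓ i) φ 0|) (signedIdx_nonempty hd₁)
  obtain ⟨i₁, hi₁, x, hx, hfx, hle⟩ :=
    exists_fdiff_eq_neg_of_isMax hstep ℓ hsymℓ hsymh φ hhyp hi₀ hmax
  set M := |fdiff (hstep i₀) (ℓ i₀) φ 0|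
  have hεinv : ε⁻¹ = 1 + 2 * ε * d₁ := by linarith
  have h1_le_inv : 1 ≤ ε⁻¹ := by rw [hεinv]; exact le_add_of_nonneg_right (by positivity)
  have hε_le_1 : ε ≤ 1 := (one_le_inv₀ hε).1 h1_le_inv
  refine ⟨fun j => if j = i₁ then ε⁻¹ else ε, fun i _ => ?_, x, hx, fun i hi => ?_⟩
  · dsimp only
    split_ifs <;> exact ⟨by linarith, by linarith⟩
  · have hεM : 0 ≤ ε * M := mul_nonneg hε.le (abs_nonneg _)
    have hsum : ∑ j ∈ signedIdx d₁, (if j = i₁ then ε⁻¹ else ε) * fdiff (hstep j) (ℓ j) φ x ≤ -M :=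
      (sum_ite_mul_le hi₁ hε.le hfx hle).trans <| by
        rw [card_signedIdx, hεinv]
        push_cast
        linear_combination hεM
    exact (hmax i hi).trans (le_max_of_le_left (le_neg_of_le_neg hsum))

/-- Lemma 9.8.1 of the paper: if `max_i |δ_i φ(x)| ≤ max_i |δ_i φ(0)|` for all
`x ∈ {h_iℓ_i}`, then `max_i |δ_i φ(0)|` is dominated by the maximum of
`(Σ_i γ_i δ_i φ(x))⁻` over `γ ∈ Γ = [ε, ε⁻¹]^{±1,…,±d₁}` and
`x ∈ {0} ∪ {h_jℓ_j}`; the maximum is expressed by exhibiting maximizers. -/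
theorem stmt_8 {d d₁ : ℕ} (hd₁ : 1 ≤ d₁) (ε : ℝ) (hε : 0 < ε)
    (hεe : ε⁻¹ - 2 * ε * d₁ = 1)
    (hstep : ℤ → ℝ) (ℓ : ℤ → Fin d → ℝ)
    (hpos : ∀ i, 0 < hstep i) (hsymℓ : ∀ i, ℓ (-i) = -ℓ i)
    (hsymh : ∀ i, hstep (-i) = hstep i)
    (φ : (Fin d → ℝ) → ℝ)
    (hhyp : ∀ j ∈ signedIdx d₁, ∀ i ∈ signedIdx d₁, ∃ i' ∈ signedIdx d₁,
      |fdiff (hstep i) (ℓ i) φ (hstep j • ℓ j)| ≤ |fdiff (hstep i') (ℓ i') φ 0|) :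
    ∃ γ : ℤ → ℝ, (∀ i ∈ signedIdx d₁, ε ≤ γ i ∧ γ i ≤ ε⁻¹) ∧
      ∃ x ∈ insert (0 : Fin d → ℝ) ((signedIdx d₁).image fun j => hstep j • ℓ j),
        ∀ i ∈ signedIdx d₁,
          |fdiff (hstep i) (ℓ i) φ 0|
            ≤ npart (∑ j ∈ signedIdx d₁, γ j * fdiff (hstep j) (ℓ j) φ x) :=
  stmt_8_general hd₁ ε hε hεe hstep ℓ hsymℓ hsymh φ hhyp
end
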